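/- arXiv:2211.14213 — 6 statements merged into one kernel-verified Lean document; each statement's English description precedes it below -/
import Mathlib

section
/- If φ ∈ ℕ^{p+1} is strictly increasing with φ_1 = 0 and φ_{j+1} = 2φ_j + 1 for all j, then φ_j = 2^{j-1} − 1, and the diagonal entries 2φ_j for j ∈ [p] are distinct from every off-diagonal entry φ_i + φ_j (i ≠ j) of the degree table. -/
/-! Shifting by one turns `φ` into `j ↦ 2 ^ j`, and the equation `2 φ_j = φ_i + φ_j'` into
`2 ^ i + 2 ^ j' = 2 ^ (j + 1)`, which forces `i = j'`. -/

-- For `a < b` the sum lies strictly between `2 ^ b` and `2 ^ (b + 1)`.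
lemma Nat.two_pow_add_two_pow_ne_two_pow_of_lt {a b k : ℕ} (h : a < b) :
    2 ^ a + 2 ^ b ≠ 2 ^ k := by
  intro hk
  have ha : 0 < 2 ^ a := by positivity
  have hab : 2 ^ a < 2 ^ b := Nat.pow_lt_pow_right (by norm_num) h
  have hbk : b < k := (Nat.pow_lt_pow_iff_right (a := 2) (by norm_num)).mp (by omega)
  have hkb : k < b + 1 :=
    (Nat.pow_lt_pow_iff_right (a := 2) (by norm_num)).mp (by rw [pow_succ]; omega)
  omega

lemma Nat.eq_of_two_pow_add_two_pow_eq_two_pow {a b k : ℕ} (h : 2 ^ a + 2 ^ b = 2 ^ k) :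
    a = b := by
  rcases lt_trichotomy a b with hab | hab | hab
  · exact absurd h (two_pow_add_two_pow_ne_two_pow_of_lt hab)
  · exact hab
  · exact absurd (add_comm (2 ^ a) _ ▸ h) (two_pow_add_two_pow_ne_two_pow_of_lt hab)

lemma add_one_eq_two_pow_of_doubling {p : ℕ} {φ : Fin (p + 1) → ℕ} (h0 : φ 0 = 0)
    (hrec : ∀ j : Fin p, φ j.succ = 2 * φ j.castSucc + 1) (j : Fin (p + 1)) :
    φ j + 1 = 2 ^ (j : ℕ) := by
  induction j using Fin.induction with
  | zero => simp [h0]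
  | succ j ih =>
    rw [hrec j, Fin.val_succ, pow_succ, ← Fin.val_castSucc, ← ih]
    ring

/-- If `φ ∈ ℕ^{p+1}` satisfies `φ 0 = 0` and `φ_{j+1} = 2 φ_j + 1`, then
`φ j = 2^j - 1`, and each diagonal entry `2 φ j` (for `j < p`) is distinct from
every off-diagonal entry `φ i + φ j'` (`i ≠ j'`) of the degree table. -/
theorem doubling_exponents_valid {p : ℕ} (φ : Fin (p + 1) → ℕ)
    (h0 : φ 0 = 0)
    (hrec : ∀ j : Fin p, φ j.succ = 2 * φ j.castSucc + 1) :
    (∀ j : Fin (p + 1), φ j = 2 ^ (j : ℕ) - 1) ∧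
    (∀ j : Fin (p + 1), (j : ℕ) < p →
      ∀ i j' : Fin (p + 1), i ≠ j' → 2 * φ j ≠ φ i + φ j') := by
  have hφ := add_one_eq_two_pow_of_doubling h0 hrec
  refine ⟨fun j => by rw [← hφ j, Nat.add_sub_cancel], ?_⟩
  intro j _ i j' hij hdiag
  refine hij (Fin.ext (Nat.eq_of_two_pow_add_two_pow_eq_two_pow (k := j + 1) ?_))
  rw [← hφ i, ← hφ j', pow_succ, ← hφ j]
  omega
end

section
/- Define φ⁰ = (0) and φ^{n+1} as the concatenation of φⁿ with φⁿ + (2Mₙ+1)·𝟙, where Mₙ is the maximum element of φⁿ. Then the number of distinct pairwise sums {φⁿ_i + φⁿ_j} equals 3ⁿ. -/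
open Finset Pointwise

/-- The iterative doubling construction: `φ⁰ = (0)` and `φ^{n+1}` is the
concatenation of `φⁿ` with `φⁿ + (2Mₙ+1)·𝟙`, where `Mₙ = max φⁿ`. -/
def phiList : ℕ → List ℕ
  | 0 => [0]
  | n + 1 =>
      let L := phiList n
      let M := L.foldr max 0
      L ++ L.map (· + (2 * M + 1))

lemma mem_le_foldr_max (L : List ℕ) : ∀ x ∈ L, x ≤ L.foldr max 0 := by
  induction L with
  | nil => simp
  | cons a l ih =>
      intro x hx
      rcases List.mem_cons.1 hx with rfl | hx
      · exact le_max_left _ _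
      · exact (ih x hx).trans (le_max_right _ _)

lemma add_singleton_eq_image (s : Finset ℕ) (a : ℕ) :
    s + {a} = s.image (· + a) := by
  ext x
  simp [Finset.mem_add]

/-- The number of distinct pairwise sums `{φⁿ_i + φⁿ_j}` of `φⁿ` equals `3ⁿ`. -/
theorem phiList_card_sums (n : ℕ) :
    (Finset.image (fun q : ℕ × ℕ => q.1 + q.2)
        ((phiList n).toFinset ×ˢ (phiList n).toFinset)).card = 3 ^ n := by
  have key : ∀ m, ((phiList m).toFinset + (phiList m).toFinset).card = 3 ^ m := by
    intro m
    induction m with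
    | zero => decide
    | succ k ih =>
        set B : Finset ℕ := (phiList k).toFinset with hB
        set M : ℕ := (phiList k).foldr max 0 with hM
        set c : ℕ := 2 * M + 1 with hc
        set C : Finset ℕ := B + {c} with hC
        have hA : (phiList (k + 1)).toFinset = B ∪ C := by
          rw [hC, add_singleton_eq_image]
          show (phiList k ++ (phiList k).map (· + (2 * (phiList k).foldr max 0 + 1))).toFinset = _
          rw [List.toFinset_append, ← hM, ← hc]
          congr 1
          ext x
          simp [hB]
        have hbound : ∀ x ∈ B + B, x ≤ 2 * M := by
          intro x hx
          rw [Finset.mem_add] at hx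
          obtain ⟨a, ha, b, hb, rfl⟩ := hx
          have h1 := mem_le_foldr_max (phiList k) a (List.mem_toFinset.1 ha)
          have h2 := mem_le_foldr_max (phiList k) b (List.mem_toFinset.1 hb)
          omega
        have e1 : B + C = (B + B) + {c} := by rw [hC, add_assoc]
        have e2 : C + B = (B + B) + {c} := by rw [hC, add_right_comm]
        have e3 : C + C = (B + B) + {2 * c} := by
          rw [hC, add_add_add_comm, Finset.singleton_add_singleton]
          have h2c : c + c = 2 * c := by omega
          rw [h2c]
        have expand : (B ∪ C) + (B ∪ C) =
            ((B + B) ∪ ((B + B) + {c})) ∪ ((B + B) + {2 * c}) := by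
          rw [Finset.union_add, Finset.add_union, Finset.add_union, e1, e2, e3]
          ext x
          simp only [Finset.mem_union]
          tauto
        have memc : ∀ x ∈ (B + B) + {c}, c ≤ x ∧ x ≤ 2 * M + c := by
          intro x hx
          rw [add_singleton_eq_image, Finset.mem_image] at hx
          obtain ⟨a, ha, rfl⟩ := hx
          exact ⟨by omega, by have := hbound a ha; omega⟩
        have mem2c : ∀ x ∈ (B + B) + {2 * c}, 2 * c ≤ x := by
          intro x hx
          rw [add_singleton_eq_image, Finset.mem_image] at hx
          obtain ⟨a, ha, rfl⟩ := hx
          omega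
        have d1 : Disjoint ((B + B) ∪ ((B + B) + {c})) ((B + B) + {2 * c}) := by
          rw [Finset.disjoint_left]
          intro x hx hx2
          have h2 := mem2c x hx2
          rcases Finset.mem_union.1 hx with h | h
          · have := hbound x h; omega
          · have := memc x h; omega
        have d2 : Disjoint (B + B) ((B + B) + {c}) := by
          rw [Finset.disjoint_left]
          intro x hx hx2
          have := hbound x hx
          have := memc x hx2
          omega
        rw [hA, expand, Finset.card_union_of_disjoint d1,
          Finset.card_union_of_disjoint d2, Finset.card_add_singleton,
          Finset.card_add_singleton, ih]
        ring
  rw [Finset.image_add_product]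
  exact key n
end

section
/- In the iterative doubling construction (φ⁰ = (0), φ^{n+1} = φⁿ concatenated with φⁿ + (2Mₙ+1)·𝟙 where Mₙ = max φⁿ), the list φⁿ is valid: for each index j with 1 ≤ j ≤ 2ⁿ − 1 (all but the last), the value 2φⁿ_j occurs in the degree table only as the (j,j) diagonal entry. -/
/-- Binary digits of `i` read in base 3. -/
def g (i : ℕ) : ℕ := Nat.ofDigits 3 (Nat.digits 2 i)

lemma grec (a : ℕ) : g a = a % 2 + 3 * g (a / 2) := by
  rcases a with _ | k
  · simp [g]
  · unfold g
    rw [Nat.digits_def' (by norm_num : 1 < 2) (Nat.succ_pos k), Nat.ofDigits_cons]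

lemma gshift : ∀ n, ∀ i < 2 ^ n, g (2 ^ n + i) = g i + 3 ^ n := by
  intro n
  induction n with
  | zero =>
    intro i hi
    interval_cases i
    simp [g]
  | succ n ih =>
    intro i hi
    have hq : 2 ^ (n + 1) = 2 * 2 ^ n := by ring
    have h1 : (2 ^ (n + 1) + i) / 2 = 2 ^ n + i / 2 := by omega
    have h2 : (2 ^ (n + 1) + i) % 2 = i % 2 := by omega
    have e1 := grec (2 ^ (n + 1) + i)
    rw [h1, h2, ih (i / 2) (by omega)] at e1
    have e2 := grec i
    have hp : 3 ^ (n + 1) = 3 * 3 ^ n := by ring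
    omega

lemma foldr_max_init (L : List ℕ) (e : ℕ) : L.foldr max e = max (L.foldr max 0) e := by
  induction L with
  | nil => simp
  | cons a l ih => simp [ih, max_assoc]

lemma foldr_max_map_add (L : List ℕ) (c : ℕ) (h : L ≠ []) :
    (L.map (· + c)).foldr max 0 = L.foldr max 0 + c := by
  induction L with
  | nil => simp at h
  | cons a l ih =>
    cases l with
    | nil => simp
    | cons b t =>
      have h2 := ih (by simp)
      simp only [List.map_cons, List.foldr_cons] at h2 ⊢
      omega

lemma phi_ne (n : ℕ) : phiList n ≠ [] := by
  induction n with
  | zero => simp [phiList]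
  | succ n ih => simp [phiList, ih]

lemma phi_spec : ∀ n, phiList n = (List.range (2 ^ n)).map g ∧
    2 * ((phiList n).foldr max 0) + 1 = 3 ^ n := by
  intro n
  induction n with
  | zero =>
    have hg0 : g 0 = 0 := by simp [g]
    constructor
    · show [0] = List.map g (List.range 1)
      simp [List.range_succ, hg0]
    · simp [phiList]
  | succ n ih =>
    obtain ⟨hL, hM⟩ := ih
    have hdef : phiList (n + 1) =
        phiList n ++ (phiList n).map (· + (2 * ((phiList n).foldr max 0) + 1)) := rfl
    rw [hM] at hdef
    have hsplit : 2 ^ (n + 1) = 2 ^ n + 2 ^ n := by ring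
    have hrange : (List.range (2 ^ (n + 1))).map g
        = (List.range (2 ^ n)).map g ++ (List.range (2 ^ n)).map (fun i => g i + 3 ^ n) := by
      rw [hsplit, List.range_add, List.map_append, List.map_map]
      congr 1
      apply List.map_congr_left
      intro i hi
      exact gshift n i (List.mem_range.mp hi)
    have hmapeq : (phiList n).map (· + 3 ^ n) = (List.range (2 ^ n)).map (fun i => g i + 3 ^ n) := by
      rw [hL, List.map_map]
      rfl
    constructor
    · rw [hdef, hrange, ← hL, hmapeq]
    · rw [hdef, List.foldr_append, foldr_max_init, foldr_max_map_add _ _ (phi_ne n)]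
      have hp : 3 ^ (n + 1) = 3 * 3 ^ n := by ring
      omega

lemma phi_get (n i : ℕ) (hi : i < 2 ^ n) : (phiList n)[i]! = g i := by
  rw [(phi_spec n).1]
  have hlen : i < ((List.range (2 ^ n)).map g).length := by simpa
  rw [getElem!_pos ((List.range (2 ^ n)).map g) i hlen]
  simp

lemma key_aux : ∀ N a b c : ℕ, a + b + c ≤ N → g a + g b = 2 * g c → a = c ∧ b = c := by
  intro N
  induction N with
  | zero => intro a b c h1 h2; omega
  | succ N ih =>
    intro a b c h1 h2
    by_cases h0 : a = 0 ∧ b = 0 ∧ c = 0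
    · omega
    · have e1 := grec a
      have e2 := grec b
      have e3 := grec c
      have h2' : g (a / 2) + g (b / 2) = 2 * g (c / 2) := by omega
      have hlt : a / 2 + b / 2 + c / 2 ≤ N := by omega
      have := ih _ _ _ hlt h2'
      omega

/-- The list `φⁿ` from the iterative doubling construction is valid: for every
index `j` except the last (i.e. `j < 2ⁿ - 1`, zero-indexed), the value `2 φⁿ_j`
occurs in the degree table only as the `(j, j)` diagonal entry. -/
theorem phiList_valid (n : ℕ) :
    ∀ j < 2 ^ n - 1, ∀ i < 2 ^ n, ∀ j' < 2 ^ n,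
      (phiList n)[i]! + (phiList n)[j']! = 2 * (phiList n)[j]! →
        i = j ∧ j' = j := by
  intro j hj i hi j' hj' h
  rw [phi_get n i hi, phi_get n j' hj', phi_get n j (by omega)] at h
  exact key_aux (i + j' + j) i j' j le_rfl h
end

section
/- For every p ≥ 1, there exists a valid exponent list φ ∈ ℕ^{p+1} whose number of distinct pairwise sums R satisfies R ≤ 3·(p+1)^{log₂ 3}. -/
/-- binary digits read in base 3 -/
def phi3 : ℕ → ℕ
  | 0 => 0
  | n + 1 => 3 * phi3 ((n + 1) / 2) + (n + 1) % 2
decreasing_by exact Nat.div_lt_self (Nat.succ_pos n) one_lt_two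

lemma phi3_eq (a : ℕ) : phi3 a = 3 * phi3 (a / 2) + a % 2 := by
  cases a with
  | zero => simp [phi3]
  | succ n => rw [phi3]

lemma phi3_valid : ∀ N a b c : ℕ, a + b + c ≤ N →
    phi3 a + phi3 b = 2 * phi3 c → a = c ∧ b = c := by
  intro N
  induction N with
  | zero => intro a b c h _; omega
  | succ N ih =>
    intro a b c h heq
    rcases Nat.eq_zero_or_pos (a + b + c) with h0 | h0
    · omega
    · have ea := phi3_eq a
      have eb := phi3_eq b
      have ec := phi3_eq c
      have key : phi3 (a / 2) + phi3 (b / 2) = 2 * phi3 (c / 2) ∧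
          a % 2 = c % 2 ∧ b % 2 = c % 2 := by omega
      have hle : a / 2 + b / 2 + c / 2 ≤ N := by omega
      have := ih (a / 2) (b / 2) (c / 2) hle key.1
      omega

lemma phi3_lt : ∀ n a : ℕ, a < 2 ^ n → 2 * phi3 a < 3 ^ n := by
  intro n
  induction n with
  | zero =>
    intro a ha
    interval_cases a
    simp [phi3]
  | succ n ih =>
    intro a ha
    have h2 : a / 2 < 2 ^ n := by omega
    have := ih (a / 2) h2
    have := phi3_eq a
    have h3 : (3:ℕ) ^ (n + 1) = 3 * 3 ^ n := by ring
    omega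

/-- For every `p ≥ 1` there is a valid exponent list `φ ∈ ℕ^{p+1}` whose number
of distinct pairwise sums `R` satisfies `R ≤ 3 (p+1) ^ (log₂ 3)`. -/
theorem exists_valid_exponents_subquadratic (p : ℕ) (hp : 1 ≤ p) :
    ∃ φ : Fin (p + 1) → ℕ,
      (∀ j : Fin (p + 1), (j : ℕ) < p →
        ∀ i j' : Fin (p + 1), (i, j') ≠ (j, j) → φ i + φ j' ≠ 2 * φ j) ∧
      ((Finset.univ.image
          (fun q : Fin (p + 1) × Fin (p + 1) => φ q.1 + φ q.2)).card : ℝ) ≤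
        3 * (p + 1 : ℝ) ^ (Real.logb 2 3) := by
  set n := Nat.clog 2 (p + 1) with hn
  have hn1 : 1 ≤ n := Nat.clog_pos one_lt_two (by omega)
  have hub : p + 1 ≤ 2 ^ n := Nat.le_pow_clog one_lt_two _
  have hlb : 2 ^ (n - 1) < p + 1 := Nat.pow_pred_clog_lt_self one_lt_two (by omega)
  refine ⟨fun j => phi3 j, ?_, ?_⟩
  · intro j _ i j' hne heq
    obtain ⟨hi, hj'⟩ := phi3_valid (i + j' + j) i j' j le_rfl heq
    exact hne (by simp [Prod.ext_iff, Fin.ext_iff, hi, hj'])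
  · -- cardinality bound
    have hsub : (Finset.univ.image
        (fun q : Fin (p + 1) × Fin (p + 1) => phi3 q.1 + phi3 q.2)) ⊆
        Finset.range (3 ^ n) := by
      intro x hx
      simp only [Finset.mem_image, Finset.mem_univ, true_and] at hx
      obtain ⟨q, rfl⟩ := hx
      have h1 : 2 * phi3 q.1 < 3 ^ n := phi3_lt n q.1 (lt_of_lt_of_le q.1.isLt hub)
      have h2 : 2 * phi3 q.2 < 3 ^ n := phi3_lt n q.2 (lt_of_lt_of_le q.2.isLt hub)
      simp only [Finset.mem_range]
      omega
    have hcard : (Finset.univ.image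
        (fun q : Fin (p + 1) × Fin (p + 1) => phi3 q.1 + phi3 q.2)).card ≤ 3 ^ n := by
      simpa using Finset.card_le_card hsub
    calc ((Finset.univ.image
          (fun q : Fin (p + 1) × Fin (p + 1) => phi3 q.1 + phi3 q.2)).card : ℝ)
        ≤ (3 : ℝ) ^ n := by exact_mod_cast hcard
      _ ≤ 3 * (p + 1 : ℝ) ^ (Real.logb 2 3) := by
          have hL : (0:ℝ) ≤ Real.logb 2 3 := Real.logb_nonneg one_lt_two (by norm_num)
          have h2L : (2:ℝ) ^ (Real.logb 2 3) = 3 :=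
            Real.rpow_logb two_pos (by norm_num) (by norm_num)
          have hcast : ((2:ℝ) ^ (n - 1 : ℕ)) ≤ (p + 1 : ℝ) := by
            exact_mod_cast hlb.le
          have hmono : ((2:ℝ) ^ (n - 1 : ℕ)) ^ (Real.logb 2 3) ≤
              (p + 1 : ℝ) ^ (Real.logb 2 3) :=
            Real.rpow_le_rpow (by positivity) hcast hL
          have heq1 : ((2:ℝ) ^ (n - 1 : ℕ)) ^ (Real.logb 2 3) = (3:ℝ) ^ (n - 1 : ℕ) := by
            rw [← Real.rpow_natCast (2:ℝ) (n - 1), ← Real.rpow_natCast (3:ℝ) (n - 1),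
              ← Real.rpow_mul (by norm_num), mul_comm, Real.rpow_mul (by norm_num), h2L]
          have h3n : (3:ℝ) ^ n = 3 * (3:ℝ) ^ (n - 1 : ℕ) := by
            rw [← pow_succ']
            congr 1
            omega
          rw [h3n]
          have := heq1 ▸ hmono
          linarith
end

section
/- There is no valid exponent list φ ∈ ℕ^5 (strictly increasing, p = 4) whose largest element is less than 8; i.e., 8 is the minimal possible largest element for p = 4, achieved by φ = (0, 1, 3, 7, 8). -/
/-- For `p = 4`, no strictly increasing valid exponent list `φ ∈ ℕ^5` has
largest element less than `8`; and `8` is achieved by `φ = (0, 1, 3, 7, 8)`,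
which is strictly increasing and valid. -/
theorem minimal_largest_exponent_p4 :
    (¬ ∃ φ : Fin 5 → ℕ, StrictMono φ ∧
        (∀ j : Fin 5, (j : ℕ) < 4 →
          ∀ i j' : Fin 5, (i, j') ≠ (j, j) → φ i + φ j' ≠ 2 * φ j) ∧
        φ 4 < 8) ∧
    (StrictMono (![0, 1, 3, 7, 8] : Fin 5 → ℕ) ∧
      (∀ j : Fin 5, (j : ℕ) < 4 →
        ∀ i j' : Fin 5, (i, j') ≠ (j, j) →
          (![0, 1, 3, 7, 8] : Fin 5 → ℕ) i + ![0, 1, 3, 7, 8] j' ≠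
            2 * (![0, 1, 3, 7, 8] : Fin 5 → ℕ) j) ∧
      (![0, 1, 3, 7, 8] : Fin 5 → ℕ) 4 = 8) := by
  constructor
  · rintro ⟨φ, hm, hc, hlt⟩
    have m01 := hm (show (0:Fin 5) < 1 by decide)
    have m12 := hm (show (1:Fin 5) < 2 by decide)
    have m23 := hm (show (2:Fin 5) < 3 by decide)
    have m34 := hm (show (3:Fin 5) < 4 by decide)
    have h0_0_1 := hc 0 (by decide) 0 1 (by decide)
    have h0_0_2 := hc 0 (by decide) 0 2 (by decide)
    have h0_0_3 := hc 0 (by decide) 0 3 (by decide)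
    have h0_0_4 := hc 0 (by decide) 0 4 (by decide)
    have h0_1_0 := hc 0 (by decide) 1 0 (by decide)
    have h0_1_1 := hc 0 (by decide) 1 1 (by decide)
    have h0_1_2 := hc 0 (by decide) 1 2 (by decide)
    have h0_1_3 := hc 0 (by decide) 1 3 (by decide)
    have h0_1_4 := hc 0 (by decide) 1 4 (by decide)
    have h0_2_0 := hc 0 (by decide) 2 0 (by decide)
    have h0_2_1 := hc 0 (by decide) 2 1 (by decide)
    have h0_2_2 := hc 0 (by decide) 2 2 (by decide)
    have h0_2_3 := hc 0 (by decide) 2 3 (by decide)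
    have h0_2_4 := hc 0 (by decide) 2 4 (by decide)
    have h0_3_0 := hc 0 (by decide) 3 0 (by decide)
    have h0_3_1 := hc 0 (by decide) 3 1 (by decide)
    have h0_3_2 := hc 0 (by decide) 3 2 (by decide)
    have h0_3_3 := hc 0 (by decide) 3 3 (by decide)
    have h0_3_4 := hc 0 (by decide) 3 4 (by decide)
    have h0_4_0 := hc 0 (by decide) 4 0 (by decide)
    have h0_4_1 := hc 0 (by decide) 4 1 (by decide)
    have h0_4_2 := hc 0 (by decide) 4 2 (by decide)
    have h0_4_3 := hc 0 (by decide) 4 3 (by decide)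
    have h0_4_4 := hc 0 (by decide) 4 4 (by decide)
    have h1_0_0 := hc 1 (by decide) 0 0 (by decide)
    have h1_0_1 := hc 1 (by decide) 0 1 (by decide)
    have h1_0_2 := hc 1 (by decide) 0 2 (by decide)
    have h1_0_3 := hc 1 (by decide) 0 3 (by decide)
    have h1_0_4 := hc 1 (by decide) 0 4 (by decide)
    have h1_1_0 := hc 1 (by decide) 1 0 (by decide)
    have h1_1_2 := hc 1 (by decide) 1 2 (by decide)
    have h1_1_3 := hc 1 (by decide) 1 3 (by decide)
    have h1_1_4 := hc 1 (by decide) 1 4 (by decide)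
    have h1_2_0 := hc 1 (by decide) 2 0 (by decide)
    have h1_2_1 := hc 1 (by decide) 2 1 (by decide)
    have h1_2_2 := hc 1 (by decide) 2 2 (by decide)
    have h1_2_3 := hc 1 (by decide) 2 3 (by decide)
    have h1_2_4 := hc 1 (by decide) 2 4 (by decide)
    have h1_3_0 := hc 1 (by decide) 3 0 (by decide)
    have h1_3_1 := hc 1 (by decide) 3 1 (by decide)
    have h1_3_2 := hc 1 (by decide) 3 2 (by decide)
    have h1_3_3 := hc 1 (by decide) 3 3 (by decide)
    have h1_3_4 := hc 1 (by decide) 3 4 (by decide)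
    have h1_4_0 := hc 1 (by decide) 4 0 (by decide)
    have h1_4_1 := hc 1 (by decide) 4 1 (by decide)
    have h1_4_2 := hc 1 (by decide) 4 2 (by decide)
    have h1_4_3 := hc 1 (by decide) 4 3 (by decide)
    have h1_4_4 := hc 1 (by decide) 4 4 (by decide)
    have h2_0_0 := hc 2 (by decide) 0 0 (by decide)
    have h2_0_1 := hc 2 (by decide) 0 1 (by decide)
    have h2_0_2 := hc 2 (by decide) 0 2 (by decide)
    have h2_0_3 := hc 2 (by decide) 0 3 (by decide)
    have h2_0_4 := hc 2 (by decide) 0 4 (by decide)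
    have h2_1_0 := hc 2 (by decide) 1 0 (by decide)
    have h2_1_1 := hc 2 (by decide) 1 1 (by decide)
    have h2_1_2 := hc 2 (by decide) 1 2 (by decide)
    have h2_1_3 := hc 2 (by decide) 1 3 (by decide)
    have h2_1_4 := hc 2 (by decide) 1 4 (by decide)
    have h2_2_0 := hc 2 (by decide) 2 0 (by decide)
    have h2_2_1 := hc 2 (by decide) 2 1 (by decide)
    have h2_2_3 := hc 2 (by decide) 2 3 (by decide)
    have h2_2_4 := hc 2 (by decide) 2 4 (by decide)
    have h2_3_0 := hc 2 (by decide) 3 0 (by decide)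
    have h2_3_1 := hc 2 (by decide) 3 1 (by decide)
    have h2_3_2 := hc 2 (by decide) 3 2 (by decide)
    have h2_3_3 := hc 2 (by decide) 3 3 (by decide)
    have h2_3_4 := hc 2 (by decide) 3 4 (by decide)
    have h2_4_0 := hc 2 (by decide) 4 0 (by decide)
    have h2_4_1 := hc 2 (by decide) 4 1 (by decide)
    have h2_4_2 := hc 2 (by decide) 4 2 (by decide)
    have h2_4_3 := hc 2 (by decide) 4 3 (by decide)
    have h2_4_4 := hc 2 (by decide) 4 4 (by decide)
    have h3_0_0 := hc 3 (by decide) 0 0 (by decide)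
    have h3_0_1 := hc 3 (by decide) 0 1 (by decide)
    have h3_0_2 := hc 3 (by decide) 0 2 (by decide)
    have h3_0_3 := hc 3 (by decide) 0 3 (by decide)
    have h3_0_4 := hc 3 (by decide) 0 4 (by decide)
    have h3_1_0 := hc 3 (by decide) 1 0 (by decide)
    have h3_1_1 := hc 3 (by decide) 1 1 (by decide)
    have h3_1_2 := hc 3 (by decide) 1 2 (by decide)
    have h3_1_3 := hc 3 (by decide) 1 3 (by decide)
    have h3_1_4 := hc 3 (by decide) 1 4 (by decide)
    have h3_2_0 := hc 3 (by decide) 2 0 (by decide)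
    have h3_2_1 := hc 3 (by decide) 2 1 (by decide)
    have h3_2_2 := hc 3 (by decide) 2 2 (by decide)
    have h3_2_3 := hc 3 (by decide) 2 3 (by decide)
    have h3_2_4 := hc 3 (by decide) 2 4 (by decide)
    have h3_3_0 := hc 3 (by decide) 3 0 (by decide)
    have h3_3_1 := hc 3 (by decide) 3 1 (by decide)
    have h3_3_2 := hc 3 (by decide) 3 2 (by decide)
    have h3_3_4 := hc 3 (by decide) 3 4 (by decide)
    have h3_4_0 := hc 3 (by decide) 4 0 (by decide)
    have h3_4_1 := hc 3 (by decide) 4 1 (by decide)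
    have h3_4_2 := hc 3 (by decide) 4 2 (by decide)
    have h3_4_3 := hc 3 (by decide) 4 3 (by decide)
    have h3_4_4 := hc 3 (by decide) 4 4 (by decide)
    omega
  · exact ⟨by decide, by decide, rfl⟩
end

section
/- Let f(x) = ∑_{j=1}^p A_j x^{φ_j} + R x^{φ_{p+1}} be a matrix polynomial with a valid exponent list φ. Then in the product h(x) = f(x)·f(x)ᵀ, the coefficient of x^{2φ_j} equals A_j·A_jᵀ for each j ∈ [p], and hence A·Aᵀ = ∑_{j=1}^p (coefficient of x^{2φ_j} in h). -/
open Matrix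

lemma sdgmm_aux {M : Type*} [AddCommMonoid M] (D a b : ℕ) (X : M) :
    ∑ e ∈ Finset.range (D + 1), (if a = e ∧ b = D - e then X else 0) =
      if a + b = D then X else 0 := by
  simp_rw [ite_and]
  rw [Finset.sum_ite_eq]
  simp only [Finset.mem_range]
  split_ifs with h1 h2 h2 <;> first | rfl | omega

/-- Let `f(x) = ∑_{j=1}^p A_j x^{φ_j} + R x^{φ_{p+1}}` with a valid exponent
list `φ`, and let `h(x) = f(x) f(x)ᵀ`. Then the coefficient of `x^{2 φ_j}` in
`h` equals `A_j A_jᵀ` for each `j ∈ [p]`, and hence `A Aᵀ` is the sum of these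
coefficients. -/
theorem sdgmm_decoding {F : Type*} [Field F] {t k p : ℕ}
    (A : Fin p → Matrix (Fin t) (Fin k) F) (R : Matrix (Fin t) (Fin k) F)
    (φ : Fin (p + 1) → ℕ)
    (hvalid : ∀ j : Fin (p + 1), (j : ℕ) < p →
      ∀ i j' : Fin (p + 1), (i, j') ≠ (j, j) → φ i + φ j' ≠ 2 * φ j)
    -- `c d` is the coefficient of `x^d` in `f(x)`
    (c : ℕ → Matrix (Fin t) (Fin k) F)
    (hc : ∀ d, c d = (∑ j : Fin p, if φ j.castSucc = d then A j else 0) +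
        (if φ (Fin.last p) = d then R else 0))
    -- `hcoef d` is the coefficient of `x^d` in `h(x) = f(x) f(x)ᵀ`
    (hcoef : ℕ → Matrix (Fin t) (Fin t) F)
    (hh : ∀ d, hcoef d = ∑ e ∈ Finset.range (d + 1), c e * (c (d - e))ᵀ)
    -- `Amat` is the matrix with column blocks `A j`
    (Amat : Matrix (Fin t) (Fin p × Fin k) F)
    (hAmat : ∀ i j l, Amat i (j, l) = A j i l) :
    (∀ j : Fin p, hcoef (2 * φ j.castSucc) = A j * (A j)ᵀ) ∧
    Amat * Amatᵀ = ∑ j : Fin p, hcoef (2 * φ j.castSucc) := by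
  set B : Fin (p + 1) → Matrix (Fin t) (Fin k) F := Fin.lastCases R A with hB
  have cB : ∀ d, c d = ∑ i : Fin (p + 1), if φ i = d then B i else 0 := by
    intro d
    rw [hc, Fin.sum_univ_castSucc]
    simp [hB]
  have key : ∀ j : Fin p, hcoef (2 * φ j.castSucc) = A j * (A j)ᵀ := by
    intro j
    have hD : hcoef (2 * φ j.castSucc) =
        ∑ i : Fin (p + 1), ∑ i' : Fin (p + 1),
          if φ i + φ i' = 2 * φ j.castSucc then B i * (B i')ᵀ else 0 := by
      rw [hh]
      simp only [cB, transpose_sum]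
      simp_rw [Matrix.sum_mul, Matrix.mul_sum]
      rw [Finset.sum_comm (s := Finset.range (2 * φ j.castSucc + 1)) (t := Finset.univ)]
      refine Finset.sum_congr rfl fun i _ => ?_
      rw [Finset.sum_comm (s := Finset.range (2 * φ j.castSucc + 1)) (t := Finset.univ)]
      refine Finset.sum_congr rfl fun i' _ => ?_
      rw [← sdgmm_aux (2 * φ j.castSucc) (φ i) (φ i') (B i * (B i')ᵀ)]
      refine Finset.sum_congr rfl fun e _ => ?_
      simp only [apply_ite transpose, transpose_zero, ite_mul, mul_ite,
        zero_mul, mul_zero, ite_and]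
      split_ifs <;> simp
    rw [hD]
    have hjc : (j.castSucc : ℕ) < p := by simp [j.isLt]
    rw [Finset.sum_eq_single j.castSucc]
    · rw [Finset.sum_eq_single j.castSucc]
      · rw [if_pos (by ring)]
        simp [hB]
      · intro i' _ hne
        rw [if_neg (hvalid j.castSucc hjc _ _ (by simp [hne]))]
      · simp
    · intro i _ hne
      refine Finset.sum_eq_zero fun i' _ => ?_
      rw [if_neg (hvalid j.castSucc hjc _ _ (by simp [hne]))]
    · simp
  refine ⟨key, ?_⟩
  simp_rw [key]
  ext i i'
  simp [Matrix.mul_apply, hAmat, Fintype.sum_prod_type, Matrix.sum_apply]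
end
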